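/- For n = 3, the number of sublattices of index m in ℤ³ equals Σ_{d ∣ m} d·σ(d), where σ is the sum-of-divisors function. -/

import Mathlib

/-!
If `H ≤ ℤ × B` projects onto `aℤ` and meets `0 × B` in `0 × L`, then
`[ℤ × B : H] = a · [B : L]`. For `a ≠ 0` the subgroup `H` is determined by `a`, `L` and the
class modulo `L` of any `b` with `(a, b) ∈ H`, and every class occurs. Hence the subgroups of
index `m` of `ℤ × B` correspond to triples `(d, L, q)` with `d ∣ m`, `[B : L] = d` and
`q ∈ B ⧸ L`, so their number is `∑_{d ∣ m} d · N_B(d)`. Peeling off one factor `ℤ` at a time,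
starting from `ℤ⁰`, gives `N_1(m) = 1`, `N_2(m) = σ(m)` and `N_3(m) = ∑_{d ∣ m} d · σ(d)`.
-/

/-- The number of sublattices (subgroups) of index `m` in `ℤ^n`. -/
noncomputable def sublatticeCount (n m : ℕ) : ℕ :=
  Nat.card {H : AddSubgroup (Fin n → ℤ) // H.index = m}

open AddSubgroup Function

theorem AddSubgroup.index_eq_index_map_mul_relIndex_ker {G G' : Type*} [AddGroup G] [AddGroup G']
    (H : AddSubgroup G) [H.Normal] {f : G →+ G'} (hf : Surjective f) :
    H.index = (H.map f).index * H.relIndex f.ker := by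
  rw [index_map, f.range_eq_top_of_surjective hf, index_top, mul_one, ← relIndex_sup_left,
    mul_comm, relIndex_mul_index le_sup_left]

theorem AddMonoidHom.range_inr_eq_ker_fst {A B : Type*} [AddGroup A] [AddGroup B] :
    (inr A B).range = (fst A B).ker := by
  ext ⟨a, b⟩
  simp [eq_comm, AddMonoidHom.ker_fst, mem_prod]

theorem AddSubgroup.index_eq_index_map_fst_mul_index_comap_inr {A B : Type*} [AddCommGroup A]
    [AddCommGroup B] (H : AddSubgroup (A × B)) :
    H.index = (H.map (AddMonoidHom.fst A B)).index * (H.comap (AddMonoidHom.inr A B)).index := by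
  rw [index_comap, AddMonoidHom.range_inr_eq_ker_fst,
    ← index_eq_index_map_mul_relIndex_ker H Prod.fst_surjective]

theorem Int.addSubgroup_eq_zmultiples_index (H : AddSubgroup ℤ) :
    H = zmultiples (H.index : ℤ) := by
  obtain ⟨a, rfl⟩ := Int.subgroup_cyclic H
  rw [← zmultiples_eq_closure, Int.index_zmultiples, Int.zmultiples_natAbs]

section Hermite

variable {B : Type*} [AddCommGroup B] {a : ℕ} {L : AddSubgroup B} {q : B ⧸ L}

/-- The subgroup generated by `(a, b)` and `0 × L`, for any `b` in the class `q`. -/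
def hermiteExtension (a : ℕ) (L : AddSubgroup B) (q : B ⧸ L) : AddSubgroup (ℤ × B) :=
  (zmultiples ((a : ℤ), q)).comap ((AddMonoidHom.id ℤ).prodMap (QuotientAddGroup.mk' L))

theorem mem_hermiteExtension {p : ℤ × B} :
    p ∈ hermiteExtension a L q ↔ ∃ k : ℤ, k * a = p.1 ∧ k • q = (p.2 : B ⧸ L) := by
  simp [hermiteExtension, mem_zmultiples_iff, Prod.ext_iff]

theorem map_fst_hermiteExtension :
    (hermiteExtension a L q).map (AddMonoidHom.fst ℤ B) = zmultiples (a : ℤ) := by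
  ext x
  simp only [mem_map, mem_hermiteExtension, mem_zmultiples_iff, smul_eq_mul]
  constructor
  · rintro ⟨p, ⟨k, hk, -⟩, rfl⟩
    exact ⟨k, hk⟩
  · rintro ⟨k, rfl⟩
    obtain ⟨b, hb⟩ := QuotientAddGroup.mk_surjective (k • q)
    exact ⟨(k * a, b), ⟨k, rfl, hb.symm⟩, rfl⟩

theorem comap_inr_hermiteExtension (ha : a ≠ 0) :
    (hermiteExtension a L q).comap (AddMonoidHom.inr ℤ B) = L := by
  ext b
  simp only [mem_comap, AddMonoidHom.inr_apply, mem_hermiteExtension, mul_eq_zero,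
    Int.natCast_eq_zero, ha, or_false]
  constructor
  · rintro ⟨k, rfl, hk⟩
    rwa [zero_smul, eq_comm, QuotientAddGroup.eq_zero_iff] at hk
  · intro hb
    exact ⟨0, rfl, by rwa [zero_smul, eq_comm, QuotientAddGroup.eq_zero_iff]⟩

theorem index_hermiteExtension (ha : a ≠ 0) :
    (hermiteExtension a L q).index = a * L.index := by
  rw [index_eq_index_map_fst_mul_index_comap_inr, map_fst_hermiteExtension,
    comap_inr_hermiteExtension ha, Int.index_zmultiples, Int.natAbs_natCast]

theorem mk_eq_of_mem_hermiteExtension (ha : a ≠ 0) {b : B}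
    (h : ((a : ℤ), b) ∈ hermiteExtension a L q) : (b : B ⧸ L) = q := by
  obtain ⟨k, hk, hq⟩ := mem_hermiteExtension.mp h
  rw [← hq, (mul_eq_right₀ (Int.natCast_ne_zero.mpr ha)).mp hk, one_smul]

theorem eq_hermiteExtension {H : AddSubgroup (ℤ × B)}
    (hH : H.map (AddMonoidHom.fst ℤ B) = zmultiples (a : ℤ)) {b : B}
    (hb : ((a : ℤ), b) ∈ H) :
    H = hermiteExtension a (H.comap (AddMonoidHom.inr ℤ B)) b := by
  ext ⟨x, y⟩
  have mem_iff (k : ℤ) (hk : k * a = x) :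
      (x, y) ∈ H ↔ k • (b : B ⧸ H.comap (AddMonoidHom.inr ℤ B)) = y := by
    subst hk
    have hsplit : ((k * a, y) : ℤ × B) = k • ((a : ℤ), b) + (0, -(k • b) + y) := by
      ext <;> simp
    rw [hsplit, H.add_mem_cancel_left (H.zsmul_mem hb k), ← QuotientAddGroup.mk_zsmul,
      QuotientAddGroup.eq]
    rfl
  rw [mem_hermiteExtension]
  constructor
  · intro hxy
    have hx : x ∈ H.map (AddMonoidHom.fst ℤ B) := mem_map_of_mem _ hxy
    obtain ⟨k, hk⟩ := mem_zmultiples_iff.mp (hH ▸ hx)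
    exact ⟨k, hk, (mem_iff k hk).mp hxy⟩
  · rintro ⟨k, hk, hq⟩
    exact (mem_iff k hk).mpr hq

end Hermite

abbrev AddSubgroupsOfIndex (G : Type*) [AddGroup G] (m : ℕ) : Type _ :=
  {H : AddSubgroup G // H.index = m}

def AddEquiv.addSubgroupsOfIndexCongr {G G' : Type*} [AddGroup G] [AddGroup G'] (e : G ≃+ G')
    (m : ℕ) : AddSubgroupsOfIndex G m ≃ AddSubgroupsOfIndex G' m :=
  e.mapAddSubgroup.toEquiv.subtypeEquiv fun H => by simp

theorem Nat.div_ne_zero_of_mem_divisors {d m : ℕ} (hd : d ∈ m.divisors) : m / d ≠ 0 :=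
  (Nat.div_pos (Nat.divisor_le hd) (Nat.pos_of_mem_divisors hd)).ne'

section Count

variable {B : Type*} [AddCommGroup B] {m : ℕ}

def hermiteExtensionOfIndex (m : ℕ) :
    (Σ d : m.divisors, Σ L : AddSubgroupsOfIndex B d, B ⧸ L.1) →
      AddSubgroupsOfIndex (ℤ × B) m
  | ⟨d, L, q⟩ => ⟨hermiteExtension (m / d) L.1 q, by
      rw [index_hermiteExtension (Nat.div_ne_zero_of_mem_divisors d.2), L.2,
        Nat.div_mul_cancel (Nat.dvd_of_mem_divisors d.2)]⟩

theorem hermiteExtensionOfIndex_injective :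
    Injective (hermiteExtensionOfIndex (B := B) m) := by
  rintro ⟨d, L, q⟩ ⟨d', L', q'⟩ h
  replace h : hermiteExtension (m / d) L.1 q = hermiteExtension (m / d') L'.1 q' :=
    congrArg Subtype.val h
  have hL : L.1 = L'.1 := by
    simpa only [comap_inr_hermiteExtension (Nat.div_ne_zero_of_mem_divisors d.2),
      comap_inr_hermiteExtension (Nat.div_ne_zero_of_mem_divisors d'.2)] using
      congrArg (comap (AddMonoidHom.inr ℤ B)) h
  obtain rfl : d = d' := Subtype.ext (L.2.symm.trans (hL ▸ L'.2))
  obtain rfl : L = L' := Subtype.ext hL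
  obtain ⟨b, rfl⟩ := QuotientAddGroup.mk_surjective q
  have hb : (((m / d : ℕ) : ℤ), b) ∈ hermiteExtension (m / d) L.1 b :=
    mem_hermiteExtension.mpr ⟨1, one_mul _, one_smul _ _⟩
  rw [h] at hb
  rw [mk_eq_of_mem_hermiteExtension (Nat.div_ne_zero_of_mem_divisors d.2) hb]

theorem hermiteExtensionOfIndex_surjective (hm : 0 < m) :
    Surjective (hermiteExtensionOfIndex (B := B) m) := by
  rintro ⟨H, hH⟩
  set L := H.comap (AddMonoidHom.inr ℤ B)
  have hmul : (H.map (AddMonoidHom.fst ℤ B)).index * L.index = m := by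
    rw [← index_eq_index_map_fst_mul_index_comap_inr, hH]
  have hd : L.index ∈ m.divisors := Nat.mem_divisors.mpr ⟨Dvd.intro_left _ hmul, hm.ne'⟩
  have hfst : H.map (AddMonoidHom.fst ℤ B) = zmultiples ((m / L.index : ℕ) : ℤ) := by
    rw [Int.addSubgroup_eq_zmultiples_index (H.map _), ← hmul,
      Nat.mul_div_cancel _ (Nat.pos_of_mem_divisors hd)]
  obtain ⟨⟨_, b⟩, hb, rfl⟩ := mem_map.mp (hfst ▸ mem_zmultiples _)
  exact ⟨⟨⟨L.index, hd⟩, ⟨L, rfl⟩, b⟩,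
    Subtype.ext (eq_hermiteExtension hfst hb).symm⟩

noncomputable def addSubgroupsOfIndexIntProdEquiv (hm : 0 < m) :
    (Σ d : m.divisors, Σ L : AddSubgroupsOfIndex B d, B ⧸ L.1) ≃
      AddSubgroupsOfIndex (ℤ × B) m :=
  .ofBijective _ ⟨hermiteExtensionOfIndex_injective, hermiteExtensionOfIndex_surjective hm⟩

theorem finite_quotient_of_mem_addSubgroupsOfIndex {d : ℕ} (hd : 0 < d)
    (L : AddSubgroupsOfIndex B d) : Finite (B ⧸ L.1) :=
  Nat.finite_of_card_ne_zero (by rw [← index_eq_card, L.2]; exact hd.ne')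

theorem card_sigma_quotient_addSubgroupsOfIndex {d : ℕ} (hd : 0 < d)
    [Finite (AddSubgroupsOfIndex B d)] :
    Nat.card (Σ L : AddSubgroupsOfIndex B d, B ⧸ L.1) =
      Nat.card (AddSubgroupsOfIndex B d) * d := by
  have := Fintype.ofFinite (AddSubgroupsOfIndex B d)
  have := finite_quotient_of_mem_addSubgroupsOfIndex (B := B) hd
  rw [Nat.card_sigma, Finset.sum_const_nat fun L _ => (index_eq_card L.1).symm.trans L.2,
    Finset.card_univ, Nat.card_eq_fintype_card]

theorem finite_addSubgroupsOfIndex_int_prod (hB : ∀ d, 0 < d → Finite (AddSubgroupsOfIndex B d))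
    (hm : 0 < m) : Finite (AddSubgroupsOfIndex (ℤ × B) m) := by
  have (d : m.divisors) := hB d (Nat.pos_of_mem_divisors d.2)
  have (d : m.divisors) :=
    finite_quotient_of_mem_addSubgroupsOfIndex (B := B) (Nat.pos_of_mem_divisors d.2)
  exact .of_equiv _ (addSubgroupsOfIndexIntProdEquiv (B := B) hm)

theorem card_addSubgroupsOfIndex_int_prod (hB : ∀ d, 0 < d → Finite (AddSubgroupsOfIndex B d))
    (hm : 0 < m) :
    Nat.card (AddSubgroupsOfIndex (ℤ × B) m) =
      ∑ d ∈ m.divisors, Nat.card (AddSubgroupsOfIndex B d) * d := by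
  have (d : m.divisors) := hB d (Nat.pos_of_mem_divisors d.2)
  have (d : m.divisors) :=
    finite_quotient_of_mem_addSubgroupsOfIndex (B := B) (Nat.pos_of_mem_divisors d.2)
  rw [← Nat.card_congr (addSubgroupsOfIndexIntProdEquiv hm), Nat.card_sigma,
    ← Finset.sum_coe_sort m.divisors]
  exact Finset.sum_congr rfl fun d _ =>
    card_sigma_quotient_addSubgroupsOfIndex (Nat.pos_of_mem_divisors d.2)

end Count

def finConsAddEquiv (n : ℕ) : ℤ × (Fin n → ℤ) ≃+ (Fin (n + 1) → ℤ) :=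
  (Fin.consLinearEquiv ℤ fun _ => ℤ).toAddEquiv

theorem finite_addSubgroupsOfIndex_fin_int (n : ℕ) {m : ℕ} (hm : 0 < m) :
    Finite (AddSubgroupsOfIndex (Fin n → ℤ) m) := by
  induction n generalizing m with
  | zero => infer_instance
  | succ n ih =>
    have := finite_addSubgroupsOfIndex_int_prod (fun d hd => ih hd) hm
    exact .of_equiv _ ((finConsAddEquiv n).addSubgroupsOfIndexCongr m)

theorem sublatticeCount_zero (m : ℕ) : sublatticeCount 0 m = if m = 1 then 1 else 0 := by
  have (H : AddSubgroup (Fin 0 → ℤ)) : H.index = 1 := by rw [Subsingleton.elim H ⊤, index_top]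
  by_cases h : m = 1 <;> simp [sublatticeCount, this, h, eq_comm]

theorem sublatticeCount_succ (n : ℕ) {m : ℕ} (hm : 0 < m) :
    sublatticeCount (n + 1) m = ∑ d ∈ m.divisors, sublatticeCount n d * d := by
  rw [sublatticeCount, ← Nat.card_congr ((finConsAddEquiv n).addSubgroupsOfIndexCongr m)]
  exact card_addSubgroupsOfIndex_int_prod (fun d hd => finite_addSubgroupsOfIndex_fin_int n hd) hm

theorem sublatticeCount_one {m : ℕ} (hm : 0 < m) : sublatticeCount 1 m = 1 := by
  simp [sublatticeCount_succ 0 hm, sublatticeCount_zero, hm.ne']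

theorem sublatticeCount_two {m : ℕ} (hm : 0 < m) :
    sublatticeCount 2 m = ArithmeticFunction.sigma 1 m := by
  rw [sublatticeCount_succ 1 hm, ArithmeticFunction.sigma_one_apply]
  exact Finset.sum_congr rfl fun d hd => by
    rw [sublatticeCount_one (Nat.pos_of_mem_divisors hd), one_mul]

theorem sublattice_count_three_eq_sum_mul_sigma (m : ℕ) (hm : 0 < m) :
    sublatticeCount 3 m = ∑ d ∈ m.divisors, d * ArithmeticFunction.sigma 1 d := by
  rw [sublatticeCount_succ 2 hm]
  exact Finset.sum_congr rfl fun d hd => by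
    rw [sublatticeCount_two (Nat.pos_of_mem_divisors hd), mul_comm]
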